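/- For every real number d ≥ 1 and every v ∈ V with v* = v, one has ⦀v⦀_d = ‖v‖; that is, ⦀·⦀_d extends the norm ‖·‖ from V_ℝ to V. -/

import Mathlib

/-!
For `v* = v` the integrand is `‖2 cos t • v‖^d = 2^d |cos t|^d ‖v‖^d`, so everything reduces
to the moment `∫₀^{2π} |cos t|^d dt = 2π Γ(d+1) / (2^d Γ(d/2+1)²)`, which is exactly what the
normalising constant `1/(2π b_d)` cancels. The moment is computed by integrating
`|x|^d e^{-x²-y²}` over the plane in Cartesian and in polar coordinates, then simplified with
Legendre's duplication formula.
-/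

open MeasureTheory

/-- Given a function `Nr` (a norm on the real points of `V`) and a conjugate-linear
involution `invol` on `V`, this is the extended quantity
`⦀v⦀_d = ((1/(2π b_d)) ∫_0^{2π} ‖e^{it}v + e^{-it}v*‖^d dt)^(1/d)` with
`b_d = Γ(d+1)/Γ(d/2+1)^2`, so `1/(2π b_d) = Γ(d/2+1)^2/(2π Γ(d+1))`. -/
noncomputable def circNorm {V : Type} [AddCommGroup V] [Module ℂ V]
    (Nr : V → ℝ) (invol : V → V) (d : ℝ) (v : V) : ℝ :=
  ((Real.Gamma (d / 2 + 1) ^ 2 / (2 * Real.pi * Real.Gamma (d + 1))) *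
    ∫ t in (0:ℝ)..(2 * Real.pi),
      Nr (Complex.exp (↑t * Complex.I) • v +
        Complex.exp (-(↑t * Complex.I)) • invol v) ^ d) ^ (1 / d) 

open Real Set

lemma integral_Ioi_rpow_mul_exp_neg_sq {s : ℝ} (hs : -1 < s) :
    ∫ x in Ioi (0:ℝ), x ^ s * exp (-x ^ 2) = Gamma ((s + 1) / 2) / 2 := by
  have h := integral_rpow_mul_exp_neg_rpow (p := 2) two_pos hs
  simp only [rpow_two] at h
  rw [h]
  ring

lemma integral_abs_rpow_mul_exp_neg_sq {s : ℝ} (hs : -1 < s) :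
    ∫ x : ℝ, |x| ^ s * exp (-x ^ 2) = Gamma ((s + 1) / 2) := by
  have h := integral_comp_abs (f := fun y : ℝ => y ^ s * exp (-y ^ 2))
  simp only [sq_abs] at h
  rw [h, integral_Ioi_rpow_mul_exp_neg_sq hs]
  ring

lemma integral_Ioo_abs_cos_rpow {d : ℝ} (hd : -1 < d) :
    Gamma (d / 2 + 1) / 2 * ∫ t in Ioo (-π) π, |cos t| ^ d = Gamma ((d + 1) / 2) * √π := by
  have hradial : ∫ r in Ioi (0:ℝ), r ^ (d + 1) * exp (-r ^ 2) = Gamma (d / 2 + 1) / 2 := by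
    rw [integral_Ioi_rpow_mul_exp_neg_sq (by linarith), show (d + 1 + 1) / 2 = d / 2 + 1 by ring]
  rw [← hradial, ← integral_abs_rpow_mul_exp_neg_sq hd,
    show √π = ∫ y : ℝ, exp (-y ^ 2) by simpa using (integral_gaussian 1).symm]
  calc (∫ r in Ioi (0:ℝ), r ^ (d + 1) * exp (-r ^ 2)) * ∫ t in Ioo (-π) π, |cos t| ^ d
      = ∫ p in polarCoord.target, (p.1 ^ (d + 1) * exp (-p.1 ^ 2)) * |cos p.2| ^ d := by
        rw [Measure.volume_eq_prod]
        exact (setIntegral_prod_mul _ _ _ _).symm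
    _ = ∫ p in polarCoord.target, p.1 •
          (|p.1 * cos p.2| ^ d * exp (-(p.1 * cos p.2) ^ 2) * exp (-(p.1 * sin p.2) ^ 2)) := by
        refine setIntegral_congr_fun (measurableSet_Ioi.prod measurableSet_Ioo) fun p hp => ?_
        have hr : (0:ℝ) < p.1 := hp.1
        have hexp : exp (-(p.1 * cos p.2) ^ 2) * exp (-(p.1 * sin p.2) ^ 2) = exp (-p.1 ^ 2) := by
          rw [← exp_add]
          congr 1
          linear_combination -p.1 ^ 2 * sin_sq_add_cos_sq p.2
        rw [smul_eq_mul, mul_assoc (|p.1 * cos p.2| ^ d), hexp, abs_mul, abs_of_pos hr,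
          mul_rpow hr.le (abs_nonneg _), rpow_add hr, rpow_one]
        ring
    _ = ∫ p : ℝ × ℝ, |p.1| ^ d * exp (-p.1 ^ 2) * exp (-p.2 ^ 2) :=
        integral_comp_polarCoord_symm fun p => |p.1| ^ d * exp (-p.1 ^ 2) * exp (-p.2 ^ 2)
    _ = (∫ x : ℝ, |x| ^ d * exp (-x ^ 2)) * ∫ y : ℝ, exp (-y ^ 2) := by
        rw [Measure.volume_eq_prod]
        exact integral_prod_mul (fun x : ℝ => |x| ^ d * exp (-x ^ 2)) fun y => exp (-y ^ 2)

lemma integral_abs_cos_rpow {d : ℝ} (hd : -1 < d) :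
    ∫ t in (0:ℝ)..(2 * π), |cos t| ^ d
      = 2 * π * Gamma (d + 1) / (2 ^ d * Gamma (d / 2 + 1) ^ 2) := by
  have hperiodic : Function.Periodic (fun t => |cos t| ^ d) (2 * π) := fun t => by
    simp only [cos_add_two_pi]
  have hIoo : ∫ t in (0:ℝ)..(2 * π), |cos t| ^ d = ∫ t in Ioo (-π) π, |cos t| ^ d := by
    have h := hperiodic.intervalIntegral_add_eq (-π) 0
    rw [show -π + 2 * π = π by ring, zero_add] at h
    rw [← h, intervalIntegral.integral_of_le (by linarith [pi_pos]), integral_Ioc_eq_integral_Ioo]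
  have hduplication : Gamma ((d + 1) / 2) * Gamma (d / 2 + 1) * 2 ^ d = Gamma (d + 1) * √π := by
    have h := Gamma_mul_Gamma_add_half ((d + 1) / 2)
    rw [show (d + 1) / 2 + 1 / 2 = d / 2 + 1 by ring, show 2 * ((d + 1) / 2) = d + 1 by ring,
      show 1 - (d + 1) = -d by ring, rpow_neg zero_le_two] at h
    rw [h]
    field_simp [(rpow_pos_of_pos two_pos d).ne']
  have hΓ : 0 < Gamma (d / 2 + 1) := Gamma_pos_of_pos (by linarith)
  rw [hIoo, eq_div_iff (by positivity)]
  linear_combination (2 * 2 ^ d * Gamma (d / 2 + 1)) * integral_Ioo_abs_cos_rpow hd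
    + 2 * √π * hduplication - 2 * Gamma (d + 1) * (sq_sqrt pi_pos.le).symm

lemma exp_mul_I_smul_add_exp_neg_mul_I_smul {V : Type*} [AddCommGroup V] [Module ℂ V]
    (t : ℝ) (v : V) :
    Complex.exp (t * Complex.I) • v + Complex.exp (-(t * Complex.I)) • v
      = ((2 * cos t : ℝ) : ℂ) • v := by
  rw [← add_smul, ← neg_mul, Complex.exp_mul_I, Complex.exp_mul_I, Complex.cos_neg,
    Complex.sin_neg]
  push_cast
  ring_nf

theorem circNorm_extends_general {V : Type} [AddCommGroup V] [Module ℂ V]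
    (invol : V → V)
    (Nr : V → ℝ)
    (hNnonneg : ∀ v : V, invol v = v → 0 ≤ Nr v)
    (hNhom : ∀ (r : ℝ) (v : V), invol v = v → Nr ((r : ℂ) • v) = |r| * Nr v)
    (d : ℝ) (hd : 1 ≤ d) :
    ∀ v : V, invol v = v → circNorm Nr invol d v = Nr v := by
  intro v hv
  have hNv : 0 ≤ Nr v := hNnonneg v hv
  have hintegrand : ∀ t : ℝ,
      Nr (Complex.exp (t * Complex.I) • v + Complex.exp (-(t * Complex.I)) • invol v) ^ d
        = 2 ^ d * Nr v ^ d * |cos t| ^ d := fun t => by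
    rw [hv, exp_mul_I_smul_add_exp_neg_mul_I_smul, hNhom _ v hv, abs_mul, abs_two,
      mul_rpow (by positivity) hNv, mul_rpow zero_le_two (abs_nonneg _)]
    ring
  have hΓ : 0 < Gamma (d + 1) := Gamma_pos_of_pos (by linarith)
  have hΓ' : 0 < Gamma (d / 2 + 1) := Gamma_pos_of_pos (by linarith)
  unfold circNorm
  simp_rw [hintegrand, intervalIntegral.integral_const_mul,
    integral_abs_cos_rpow (show -1 < d by linarith)]
  have hcancel : Gamma (d / 2 + 1) ^ 2 / (2 * π * Gamma (d + 1)) *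
      (2 ^ d * Nr v ^ d * (2 * π * Gamma (d + 1) / (2 ^ d * Gamma (d / 2 + 1) ^ 2)))
        = Nr v ^ d := by
    field_simp
  rw [hcancel, ← rpow_mul hNv, mul_one_div_cancel (by linarith), rpow_one]

/-- For every real `d ≥ 1` and every `v ∈ V` with `v* = v`, one has
`⦀v⦀_d = ‖v‖`; that is, `⦀·⦀_d` extends the norm `‖·‖` from `V_ℝ` to `V`. -/
theorem circNorm_extends {V : Type} [AddCommGroup V] [Module ℂ V]
    (invol : V → V)
    (hadd : ∀ u v : V, invol (u + v) = invol u + invol v)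
    (hsmul : ∀ (c : ℂ) (v : V), invol (c • v) = (starRingEnd ℂ c) • invol v)
    (hinvol : ∀ v : V, invol (invol v) = v)
    (Nr : V → ℝ)
    (hNnonneg : ∀ v : V, invol v = v → 0 ≤ Nr v)
    (hNdef : ∀ v : V, invol v = v → (Nr v = 0 ↔ v = 0))
    (hNhom : ∀ (r : ℝ) (v : V), invol v = v → Nr ((r : ℂ) • v) = |r| * Nr v)
    (hNadd : ∀ u v : V, invol u = u → invol v = v → Nr (u + v) ≤ Nr u + Nr v)
    (d : ℝ) (hd : 1 ≤ d) :
    ∀ v : V, invol v = v → circNorm Nr invol d v = Nr v :=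
  circNorm_extends_general invol Nr hNnonneg hNhom d hd
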